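/- For every ε ∈ (0, 1 − √(1 − λ₂/λ₁)) and every s ∈ (−1, 1), |G_ε'(s)| ≤ |G'(s)|, where G'(s) = (λ₂/2)·ln((1+s)/(1−s)). -/

import Mathlib

/-- The logarithmic part `G(s) = (λ₂/2)[(1+s)ln((1+s)/2) + (1−s)ln((1−s)/2)]`. -/
noncomputable def Glog (l2 s : ℝ) : ℝ :=
  l2 / 2 * ((1 + s) * Real.log ((1 + s) / 2) + (1 - s) * Real.log ((1 - s) / 2))

/-- Its first derivative `G'(s) = (λ₂/2)ln((1+s)/(1−s))` on `(−1,1)`. -/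
noncomputable def GlogD (l2 s : ℝ) : ℝ :=
  l2 / 2 * Real.log ((1 + s) / (1 - s))

/-- Its second derivative `G''(s) = λ₂/(1−s²)` on `(−1,1)`. -/
noncomputable def GlogDD (l2 s : ℝ) : ℝ :=
  l2 / (1 - s ^ 2)

/-- The regularization `G_ε` of `G`: the second-order Taylor polynomial of `G` at
`1−ε` (resp. `−1+ε`) for `s ≥ 1−ε` (resp. `s ≤ −1+ε`), and `G` itself in between. -/
noncomputable def Geps (l2 ε s : ℝ) : ℝ :=
  if 1 - ε ≤ s then
    Glog l2 (1 - ε) + GlogD l2 (1 - ε) * (s - (1 - ε))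
      + GlogDD l2 (1 - ε) / 2 * (s - (1 - ε)) ^ 2
  else if s ≤ -1 + ε then
    Glog l2 (-1 + ε) + GlogD l2 (-1 + ε) * (s - (-1 + ε))
      + GlogDD l2 (-1 + ε) / 2 * (s - (-1 + ε)) ^ 2
  else Glog l2 s

/-- The logarithmic potential `F(s) = (λ₁/2)(1 − s²) + G(s)`. -/
noncomputable def Flog (l1 l2 s : ℝ) : ℝ :=
  l1 / 2 * (1 - s ^ 2) + Glog l2 s

/-- The regularized potential `F_ε(s) = (λ₁/2)(1 − s²) + G_ε(s)`. -/
noncomputable def Feps (l1 l2 ε s : ℝ) : ℝ :=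
  l1 / 2 * (1 - s ^ 2) + Geps l2 ε s

/-!
On `[1 - ε, 1)` the derivative of `G_ε` is the tangent line of `G'` at `1 - ε`. Since `G'` is
nonnegative and convex on `[0, 1)` (its derivative `λ₂/(1 - s²)` increases there), this tangent
line lies between `0` and `G'`. On `(-1 + ε, 1 - ε)` the two derivatives agree, and
`(-1, -1 + ε]` is reduced to `[1 - ε, 1)` because `G_ε` is even.
-/

open Real Set Filter

section

variable (l2 : ℝ)

lemma hasDerivAt_Glog {s : ℝ} (hs : s ∈ Ioo (-1) 1) :
    HasDerivAt (Glog l2) (GlogD l2 s) s := by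
  have hp : 0 < 1 + s := by linarith [hs.1]
  have hm : 0 < 1 - s := by linarith [hs.2]
  have hplus : HasDerivAt (fun x : ℝ => 1 + x) 1 s := (hasDerivAt_id s).const_add 1
  have hminus : HasDerivAt (fun x : ℝ => 1 - x) (-1) s := (hasDerivAt_id s).const_sub 1
  have hlog := (hplus.mul ((hplus.div_const 2).log (by positivity))).add
    (hminus.mul ((hminus.div_const 2).log (by positivity)))
  refine (hlog.const_mul (l2 / 2)).congr_deriv ?_
  rw [GlogD, log_div hp.ne' hm.ne', log_div hp.ne' two_ne_zero, log_div hm.ne' two_ne_zero]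
  field_simp
  ring

lemma hasDerivAt_GlogD {s : ℝ} (hs : s ∈ Ioo (-1) 1) :
    HasDerivAt (GlogD l2) (GlogDD l2 s) s := by
  have hp : 0 < 1 + s := by linarith [hs.1]
  have hm : 0 < 1 - s := by linarith [hs.2]
  have hquot : HasDerivAt (fun x : ℝ => (1 + x) / (1 - x))
      ((1 * (1 - s) - (1 + s) * (-1)) / (1 - s) ^ 2) s :=
    ((hasDerivAt_id s).const_add 1).div ((hasDerivAt_id s).const_sub 1) hm.ne'
  refine ((hquot.log (by positivity)).const_mul (l2 / 2)).congr_deriv ?_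
  have h : 1 - s ^ 2 ≠ 0 := by nlinarith
  rw [GlogDD]
  field_simp
  ring

lemma Glog_neg (s : ℝ) : Glog l2 (-s) = Glog l2 s := by
  rw [Glog, Glog, ← sub_eq_add_neg, sub_neg_eq_add]
  ring

lemma GlogD_neg (s : ℝ) : GlogD l2 (-s) = -GlogD l2 s := by
  rw [GlogD, GlogD, ← sub_eq_add_neg, sub_neg_eq_add, ← inv_div (1 + s), log_inv, mul_neg]

lemma GlogDD_neg (s : ℝ) : GlogDD l2 (-s) = GlogDD l2 s := by
  rw [GlogDD, GlogDD, neg_sq]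

variable {l2}

lemma GlogD_nonneg (hl2 : 0 ≤ l2) {s : ℝ} (hs : s ∈ Ico 0 1) : 0 ≤ GlogD l2 s := by
  have hm : 0 < 1 - s := by linarith [hs.2]
  refine mul_nonneg (by positivity) (log_nonneg ?_)
  rw [le_div_iff₀ hm]
  linarith [hs.1]

lemma monotoneOn_GlogDD (hl2 : 0 ≤ l2) : MonotoneOn (GlogDD l2) (Ico 0 1) := by
  intro x hx y hy hxy
  have : 0 < 1 - y ^ 2 := by nlinarith [hy.1, hy.2]
  rw [GlogDD, GlogDD]
  gcongr
  exact hx.1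

lemma convexOn_GlogD (hl2 : 0 ≤ l2) : ConvexOn ℝ (Ico 0 1) (GlogD l2) := by
  have hderiv : ∀ x ∈ Ico (0 : ℝ) 1, HasDerivAt (GlogD l2) (GlogDD l2 x) x :=
    fun x hx => hasDerivAt_GlogD l2 ⟨by linarith [hx.1], hx.2⟩
  refine MonotoneOn.convexOn_of_deriv (convex_Ico 0 1)
    (fun x hx => (hderiv x hx).continuousAt.continuousWithinAt) ?_ ?_ <;> rw [interior_Ico]
  · exact fun x hx => (hderiv x (Ioo_subset_Ico_self hx)).differentiableAt.differentiableWithinAt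
  · exact ((monotoneOn_GlogDD hl2).mono Ioo_subset_Ico_self).congr
      fun x hx => (hderiv x (Ioo_subset_Ico_self hx)).deriv.symm

lemma GlogD_add_GlogDD_mul_sub_le (hl2 : 0 ≤ l2) {a s : ℝ} (ha : 0 ≤ a) (has : a ≤ s)
    (hs : s < 1) : GlogD l2 a + GlogDD l2 a * (s - a) ≤ GlogD l2 s := by
  rcases has.eq_or_lt with rfl | has
  · simp
  have hslope := (convexOn_GlogD hl2).le_slope_of_hasDerivAt ⟨ha, has.trans hs⟩
    ⟨ha.trans has.le, hs⟩ has (hasDerivAt_GlogD l2 ⟨by linarith, has.trans hs⟩)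
  rw [slope_def_field, le_div_iff₀ (sub_pos.2 has)] at hslope
  linarith

end

lemma hasDerivAt_taylor_two (c₀ c₁ c₂ a x : ℝ) :
    HasDerivAt (fun x => c₀ + c₁ * (x - a) + c₂ / 2 * (x - a) ^ 2) (c₁ + c₂ * (x - a)) x := by
  have hlin : HasDerivAt (fun x : ℝ => x - a) 1 x := (hasDerivAt_id x).sub_const a
  refine (((hlin.const_mul c₁).const_add c₀).add ((hlin.pow 2).const_mul (c₂ / 2))).congr_deriv ?_
  push_cast
  ring

section

variable {l2 ε : ℝ}

lemma Geps_neg (hε : ε < 1) (s : ℝ) : Geps l2 ε (-s) = Geps l2 ε s := by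
  have hpt : -1 + ε = -(1 - ε) := by ring
  unfold Geps
  rcases le_or_gt (1 - ε) s with hright | hright
  · rw [if_neg (by linarith), if_pos (by linarith), if_pos hright, hpt, Glog_neg, GlogD_neg,
      GlogDD_neg]
    ring
  rcases le_or_gt s (-1 + ε) with hleft | hleft
  · rw [if_pos (by linarith), if_neg (not_le.2 hright), if_pos hleft, hpt, Glog_neg, GlogD_neg,
      GlogDD_neg]
    ring
  · rw [if_neg (by linarith), if_neg (by linarith), if_neg (not_le.2 hright),
      if_neg (not_le.2 hleft), Glog_neg]

lemma deriv_Geps_neg (hε : ε < 1) (s : ℝ) :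
    deriv (Geps l2 ε) (-s) = -deriv (Geps l2 ε) s := by
  have h := deriv_comp_neg (f := Geps l2 ε) (x := s)
  simp only [Geps_neg hε] at h
  rw [h, neg_neg]

lemma Geps_eqOn_Ioc : EqOn (Geps l2 ε) (Glog l2) (Ioc (-1 + ε) (1 - ε)) := by
  rintro x ⟨hleft, hright⟩
  rcases hright.eq_or_lt with hx | hright
  · simp [Geps, hx]
  · simp only [Geps, if_neg (not_le.2 hright), if_neg (not_le.2 hleft)]

lemma Geps_eqOn_Ici : EqOn (Geps l2 ε) (fun x => Glog l2 (1 - ε) + GlogD l2 (1 - ε) *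
    (x - (1 - ε)) + GlogDD l2 (1 - ε) / 2 * (x - (1 - ε)) ^ 2) (Ici (1 - ε)) :=
  fun _ hx => if_pos hx

lemma hasDerivAt_Geps_of_mem_Ioo (hε : 0 ≤ ε) {s : ℝ} (hs : s ∈ Ioo (-1 + ε) (1 - ε)) :
    HasDerivAt (Geps l2 ε) (GlogD l2 s) s :=
  (hasDerivAt_Glog l2 ⟨by linarith [hs.1], by linarith [hs.2]⟩).congr_of_eventuallyEq
    (Geps_eqOn_Ioc.eventuallyEq_of_mem
      (mem_of_superset (Ioo_mem_nhds hs.1 hs.2) Ioo_subset_Ioc_self))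

lemma hasDerivAt_Geps_of_le (hε : ε ∈ Ioo 0 1) {s : ℝ} (hs : 1 - ε ≤ s) :
    HasDerivAt (Geps l2 ε) (GlogD l2 (1 - ε) + GlogDD l2 (1 - ε) * (s - (1 - ε))) s := by
  have hright := (hasDerivAt_taylor_two (Glog l2 (1 - ε)) (GlogD l2 (1 - ε))
    (GlogDD l2 (1 - ε)) (1 - ε) s).hasDerivWithinAt.congr Geps_eqOn_Ici (Geps_eqOn_Ici hs)
  rcases hs.eq_or_lt with rfl | hlt
  · have hleft : HasDerivWithinAt (Geps l2 ε) (GlogD l2 (1 - ε)) (Iic (1 - ε)) (1 - ε) :=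
      (hasDerivAt_Glog l2 ⟨by linarith [hε.2], by linarith [hε.1]⟩).hasDerivWithinAt
        |>.congr_of_eventuallyEq (Geps_eqOn_Ioc.eventuallyEq_of_mem
          (Ioc_mem_nhdsLE (by linarith [hε.2]))) (Geps_eqOn_Ioc ⟨by linarith [hε.2], le_rfl⟩)
    have hglued := hleft.union (by simpa using hright)
    rw [Iic_union_Ici, hasDerivWithinAt_univ] at hglued
    simpa using hglued
  · exact hright.hasDerivAt (Ici_mem_nhds hlt)

lemma abs_deriv_Geps_le_of_mem_Ico (hl2 : 0 ≤ l2) (hε : ε ∈ Ioo 0 1) {s : ℝ}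
    (hs : s ∈ Ico (1 - ε) 1) : |deriv (Geps l2 ε) s| ≤ |GlogD l2 s| := by
  have ha : 0 ≤ 1 - ε := by linarith [hε.2]
  have htangent_nonneg : 0 ≤ GlogD l2 (1 - ε) + GlogDD l2 (1 - ε) * (s - (1 - ε)) :=
    add_nonneg (GlogD_nonneg hl2 ⟨ha, by linarith [hε.1]⟩)
      (mul_nonneg (div_nonneg hl2 (by nlinarith [hε.1, hε.2])) (sub_nonneg.2 hs.1))
  rw [(hasDerivAt_Geps_of_le hε hs.1).deriv, abs_of_nonneg htangent_nonneg,
    abs_of_nonneg (GlogD_nonneg hl2 ⟨ha.trans hs.1, hs.2⟩)]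
  exact GlogD_add_GlogDD_mul_sub_le hl2 ha hs.1 hs.2

end

theorem abs_deriv_Geps_le_general (l1 l2 : ℝ) (hl2 : 0 < l2)
    (ε : ℝ) (hε : ε ∈ Set.Ioo 0 (1 - Real.sqrt (1 - l2 / l1))) :
    ∀ s ∈ Set.Ioo (-1 : ℝ) 1,
      |deriv (Geps l2 ε) s| ≤ |l2 / 2 * Real.log ((1 + s) / (1 - s))| := by
  rintro s ⟨hs₁, hs₂⟩
  have hε' : ε ∈ Ioo 0 1 := ⟨hε.1, by linarith [hε.2, sqrt_nonneg (1 - l2 / l1)]⟩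
  change |deriv (Geps l2 ε) s| ≤ |GlogD l2 s|
  rcases le_or_gt (1 - ε) s with hright | hright
  · exact abs_deriv_Geps_le_of_mem_Ico hl2.le hε' ⟨hright, hs₂⟩
  rcases le_or_gt s (-1 + ε) with hleft | hleft
  · have h := abs_deriv_Geps_le_of_mem_Ico hl2.le hε' (s := -s) ⟨by linarith, by linarith⟩
    rwa [deriv_Geps_neg hε'.2, GlogD_neg, abs_neg, abs_neg] at h
  · rw [(hasDerivAt_Geps_of_mem_Ioo hε'.1.le ⟨hleft, hright⟩).deriv]

/-- For every `ε ∈ (0, 1 − √(1 − λ₂/λ₁))` and every `s ∈ (−1,1)`,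
`|G_ε'(s)| ≤ |G'(s)|`, where `G'(s) = (λ₂/2)ln((1+s)/(1−s))`. -/
theorem abs_deriv_Geps_le (l1 l2 : ℝ) (hl2 : 0 < l2) (hl : l2 < l1)
    (ε : ℝ) (hε : ε ∈ Set.Ioo 0 (1 - Real.sqrt (1 - l2 / l1))) :
    ∀ s ∈ Set.Ioo (-1 : ℝ) 1,
      |deriv (Geps l2 ε) s| ≤ |l2 / 2 * Real.log ((1 + s) / (1 - s))| :=
  abs_deriv_Geps_le_general l1 l2 hl2 ε hε
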